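/- arXiv:1907.02460 — 11 statements merged into one kernel-verified Lean document; each statement's English description precedes it below -/
import Mathlib

section
/- For α with 1/9 ≤ α ≤ 1, the complex numbers z_±(α) = -(3 - 2√α + 3α)/8 ± (3i(1+√α)/8)·√((1-√α/3)(3√α-1)) satisfy |z_±(α)| = √α. -/
/-! With `s = √α ∈ [1/3, 1]` the radicand `(1 - s/3)(3s - 1)` is nonnegative, and the squared
modulus is `((3 - 2s + 3s²)² + 3(1 + s)²(3 - s)(3s - 1)) / 64`, which is the polynomial `s²`. -/

open Complex

lemma norm_ofReal_add_I_mul (a b : ℝ) : ‖(a : ℂ) + I * b‖ = √(a ^ 2 + b ^ 2) := by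
  rw [mul_comm]
  exact norm_add_mul_I a b

lemma norm_ofReal_sub_I_mul (a b : ℝ) : ‖(a : ℂ) - I * b‖ = √(a ^ 2 + b ^ 2) := by
  simpa [sub_eq_add_neg] using norm_ofReal_add_I_mul a (-b)

lemma zpm_re_sq_add_im_sq {s : ℝ} (hs : 1 / 3 ≤ s) (hs' : s ≤ 3) :
    (-(3 - 2 * s + 3 * s ^ 2) / 8) ^ 2 +
      (3 * (1 + s) / 8 * √((1 - s / 3) * (3 * s - 1))) ^ 2 = s ^ 2 := by
  rw [mul_pow, Real.sq_sqrt (mul_nonneg (by linarith) (by linarith))]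
  ring

/-- For `1/9 ≤ α ≤ 1`, the complex numbers
`z_±(α) = -(3 - 2√α + 3α)/8 ± (3i(1+√α)/8)·√((1-√α/3)(3√α-1))`
satisfy `|z_±(α)| = √α`. -/
theorem abs_zpm_eq_sqrt_alpha (α : ℝ) (h1 : 1/9 ≤ α) (h2 : α ≤ 1) :
    ‖(↑(-(3 - 2*Real.sqrt α + 3*α)/8) : ℂ) +
        Complex.I * (↑((3*(1+Real.sqrt α)/8) *
          Real.sqrt ((1 - Real.sqrt α/3)*(3*Real.sqrt α - 1))) : ℂ)‖ = Real.sqrt α ∧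
    ‖(↑(-(3 - 2*Real.sqrt α + 3*α)/8) : ℂ) -
        Complex.I * (↑((3*(1+Real.sqrt α)/8) *
          Real.sqrt ((1 - Real.sqrt α/3)*(3*Real.sqrt α - 1))) : ℂ)‖ = Real.sqrt α := by
  have hα : 0 ≤ α := by linarith
  have hs : 1 / 3 ≤ √α := Real.le_sqrt_of_sq_le (by linarith)
  have hs' : √α ≤ 3 := (Real.sqrt_le_one.mpr h2).trans (by norm_num)
  have key := zpm_re_sq_add_im_sq hs hs'
  rw [Real.sq_sqrt hα] at key
  rw [norm_ofReal_add_I_mul, norm_ofReal_sub_I_mul, key]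
  exact ⟨rfl, rfl⟩
end

section
/- Let 0 < α < 1/9, let (ξ,η) be a point in the open hexagon, and define the discriminants D_+(ξ,η) = ((1+3α)/2 - (1+α)(η-ξ/2))² - 4α(1-η)(1+ξ-η) and D_-(ξ,η) = ((1+3α)/2 + (1+α)(η-ξ/2))² - 4α(1+η)(1-ξ+η). Then D_-(ξ,η) = D_+(-ξ,-η), and D_+(ξ,η) and D_-(ξ,η) cannot both be negative. -/
/-- For `0 < α < 1/9` and `(ξ,η)` in the open hexagon, the discriminants
`D_+(ξ,η) = ((1+3α)/2 - (1+α)(η-ξ/2))² - 4α(1-η)(1+ξ-η)` and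
`D_-(ξ,η) = ((1+3α)/2 + (1+α)(η-ξ/2))² - 4α(1+η)(1-ξ+η)` satisfy
`D_-(ξ,η) = D_+(-ξ,-η)`, and they cannot both be negative. -/
theorem discriminants_not_both_negative (α ξ η : ℝ) (h0 : 0 < α) (h1 : α < 1/9)
    (hξ1 : -1 < ξ) (hξ2 : ξ < 1) (hη1 : -1 < η) (hη2 : η < 1)
    (hd1 : -1 < η - ξ) (hd2 : η - ξ < 1) :
    let Dp : ℝ → ℝ → ℝ := fun x y =>
      ((1+3*α)/2 - (1+α)*(y - x/2))^2 - 4*α*(1-y)*(1+x-y)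
    let Dm : ℝ → ℝ → ℝ := fun x y =>
      ((1+3*α)/2 + (1+α)*(y - x/2))^2 - 4*α*(1+y)*(1-x+y)
    Dm ξ η = Dp (-ξ) (-η) ∧ ¬(Dp ξ η < 0 ∧ Dm ξ η < 0) := by
  intro Dp Dm
  constructor
  · show ((1+3*α)/2 + (1+α)*(η - ξ/2))^2 - 4*α*(1+η)*(1-ξ+η)
      = ((1+3*α)/2 - (1+α)*((-η) - (-ξ)/2))^2 - 4*α*(1-(-η))*(1+(-ξ)-(-η))
    ring
  · rintro ⟨hp, hm⟩
    have hsum : Dp ξ η + Dm ξ η < 0 := by linarith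
    have key : 0 ≤ Dp ξ η + Dm ξ η := by
      show (0:ℝ) ≤ (((1+3*α)/2 - (1+α)*(η - ξ/2))^2 - 4*α*(1-η)*(1+ξ-η))
        + (((1+3*α)/2 + (1+α)*(η - ξ/2))^2 - 4*α*(1+η)*(1-ξ+η))
      nlinarith [mul_pos (by linarith : (0:ℝ) < 1 - 9*α) (by linarith : (0:ℝ) < 1 - α),
        sq_nonneg (η - (η - ξ)), sq_nonneg (η + (η - ξ)),
        mul_pos (by linarith : (0:ℝ) < 1 - η) (by linarith : (0:ℝ) < 1 - (η - ξ)),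
        mul_pos (by linarith : (0:ℝ) < 1 + η) (by linarith : (0:ℝ) < 1 + (η - ξ)),
        mul_pos (by linarith : (0:ℝ) < 1 - η) (by linarith : (0:ℝ) < 1 + (η - ξ)),
        mul_pos (by linarith : (0:ℝ) < 1 + η) (by linarith : (0:ℝ) < 1 - (η - ξ)),
        mul_pos h0 (mul_pos (by linarith : (0:ℝ) < 1 - η) (by linarith : (0:ℝ) < 1 + (η - ξ))),
        mul_pos h0 (mul_pos (by linarith : (0:ℝ) < 1 + η) (by linarith : (0:ℝ) < 1 - (η - ξ))),
        sq_nonneg (η - ξ/2), h0.le]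
    linarith
end

section
/- Let 1/9 < α < 1 and let (ξ,η) be in the interior of the hexagon H. Define the degree-4 polynomial Π_α(s) = (s+√α)²(s-z_+(α))(s-z_-(α)) - (η(s+1)(s+α) - ξ·s·(s+(1+α)/2))². Then: (a) the leading coefficient of Π_α is 1-(η-ξ)² > 0; (b) Π_α(0) = α²(1-η²) > 0; (c) Π_α(-α) = (α²(1-α)²/4)(1-ξ²) > 0; (d) Π_α(-√α) = -α(1-√α)⁴(ξ/2-η)² ≤ 0; (e) Π_α(-1) = ((1-α)²/4)(1-ξ²) > 0. -/
open Polynomial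

/-- For `1/9 < α < 1` and `(ξ,η)` in the open hexagon, the degree-4 polynomial
`Π_α(s) = (s+√α)²(s-z_+)(s-z_-) - (η(s+1)(s+α) - ξs(s+(1+α)/2))²`, where
`(s-z_+)(s-z_-) = s² + ((3-2√α+3α)/4)s + α`, satisfies:
(a) leading coefficient `1-(η-ξ)² > 0`; (b) `Π_α(0) = α²(1-η²) > 0`;
(c) `Π_α(-α) = (α²(1-α)²/4)(1-ξ²) > 0`; (d) `Π_α(-√α) = -α(1-√α)⁴(ξ/2-η)² ≤ 0`;
(e) `Π_α(-1) = ((1-α)²/4)(1-ξ²) > 0`. -/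
theorem Pi_alpha_evaluations (α ξ η : ℝ) (hα1 : 1/9 < α) (hα2 : α < 1)
    (hξ1 : -1 < ξ) (hξ2 : ξ < 1) (hη1 : -1 < η) (hη2 : η < 1)
    (hd1 : -1 < η - ξ) (hd2 : η - ξ < 1) :
    let P : Polynomial ℝ :=
      (X + C (Real.sqrt α))^2 * (X^2 + C ((3 - 2*Real.sqrt α + 3*α)/4) * X + C α)
        - (C η * (X + 1) * (X + C α) - C ξ * X * (X + C ((1+α)/2)))^2
    P.coeff 4 = 1 - (η - ξ)^2 ∧ 0 < 1 - (η - ξ)^2 ∧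
    P.eval 0 = α^2 * (1 - η^2) ∧ 0 < α^2 * (1 - η^2) ∧
    P.eval (-α) = (α^2 * (1-α)^2 / 4) * (1 - ξ^2) ∧ 0 < (α^2 * (1-α)^2 / 4) * (1 - ξ^2) ∧
    P.eval (-Real.sqrt α) = -α * (1 - Real.sqrt α)^4 * (ξ/2 - η)^2 ∧
      P.eval (-Real.sqrt α) ≤ 0 ∧
    P.eval (-1) = ((1-α)^2/4) * (1 - ξ^2) ∧ 0 < ((1-α)^2/4) * (1 - ξ^2) := by
  intro P
  have h0 : (0:ℝ) < α := by linarith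
  obtain ⟨s, hs, hsp⟩ : ∃ s : ℝ, s^2 = α ∧ 0 < s :=
    ⟨Real.sqrt α, Real.sq_sqrt h0.le, Real.sqrt_pos.mpr h0⟩
  have hrw : Real.sqrt α = s := by rw [← hs]; exact Real.sqrt_sq hsp.le
  simp only [P, hrw]
  subst hs
  have hs1 : s < 1 := by nlinarith
  have hs2 : (0:ℝ) < 1 - s^2 := by nlinarith
  have hξ : (0:ℝ) < 1 - ξ^2 := by nlinarith
  have hη : (0:ℝ) < 1 - η^2 := by nlinarith
  have hde : eval (-s) ((X + C s) ^ 2 * (X ^ 2 + C ((3 - 2 * s + 3 * s ^ 2) / 4) * X + C (s ^ 2)) -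
        (C η * (X + 1) * (X + C (s ^ 2)) - C ξ * X * (X + C ((1 + s ^ 2) / 2))) ^ 2)
      = -s^2 * (1 - s)^4 * (ξ/2 - η)^2 := by simp; ring
  refine ⟨?_, by nlinarith, ?_, ?_, ?_, ?_, hde, ?_, ?_, ?_⟩
  · simp only [pow_two, coeff_sub, coeff_mul, Finset.Nat.sum_antidiagonal_eq_sum_range_succ_mk,
      Finset.sum_range_succ, Finset.sum_range_zero, coeff_add, coeff_sub, coeff_C_mul, coeff_X,
      coeff_C, coeff_one, coeff_X_pow]
    norm_num
  · simp; ring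
  · exact mul_pos (pow_pos h0 2) hη
  · simp; ring
  · exact mul_pos (by positivity) hξ
  · rw [hde]
    have : (0:ℝ) ≤ s^2 * (1 - s)^4 * (ξ/2 - η)^2 := by positivity
    nlinarith
  · simp; ring
  · exact mul_pos (by positivity) hξ
end

section
/- Let 1/9 < α < 1 and (ξ,η) in the interior of the hexagon with η ≠ ξ/2. Then the polynomial Π_α(s) = (s+√α)²(s-z_+)(s-z_-) - (η(s+1)(s+α)-ξs(s+(1+α)/2))² has at least one real zero in the open interval (-1,-√α) and at least one real zero in (-√α,-α). -/
/-- For `1/9 < α < 1` and `(ξ,η)` in the open hexagon with `η ≠ ξ/2`, the polynomial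
`Π_α(s) = (s+√α)²(s-z_+)(s-z_-) - (η(s+1)(s+α) - ξs(s+(1+α)/2))²`, where
`(s-z_+)(s-z_-) = s² + ((3-2√α+3α)/4)s + α`, has at least one real zero in
`(-1,-√α)` and at least one real zero in `(-√α,-α)`. -/
theorem Pi_alpha_real_zeros (α ξ η : ℝ) (hα1 : 1/9 < α) (hα2 : α < 1)
    (hξ1 : -1 < ξ) (hξ2 : ξ < 1) (hη1 : -1 < η) (hη2 : η < 1)
    (hd1 : -1 < η - ξ) (hd2 : η - ξ < 1) (hne : η ≠ ξ/2) :
    let Pa : ℝ → ℝ := fun s =>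
      (s + Real.sqrt α)^2 * (s^2 + ((3 - 2*Real.sqrt α + 3*α)/4)*s + α)
        - (η*(s+1)*(s+α) - ξ*s*(s+(1+α)/2))^2
    (∃ s ∈ Set.Ioo (-1 : ℝ) (-Real.sqrt α), Pa s = 0) ∧
    (∃ s ∈ Set.Ioo (-Real.sqrt α) (-α), Pa s = 0) := by
  intro Pa
  have hα0 : (0:ℝ) < α := by linarith
  have hr2 : α = (Real.sqrt α)^2 := (Real.sq_sqrt hα0.le).symm
  set r := Real.sqrt α with hrdef
  have hr0 : 0 < r := Real.sqrt_pos.mpr hα0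
  have hPa : ∀ s, Pa s = (s + r)^2 * (s^2 + ((3 - 2*r + 3*α)/4)*s + α)
      - (η*(s+1)*(s+α) - ξ*s*(s+(1+α)/2))^2 := fun s => rfl
  clear_value r
  subst hr2
  have hr1 : r < 1 := by nlinarith
  have hαr : r^2 < r := by nlinarith
  have hcont : Continuous Pa := by
    simp only [hPa] at *
    fun_prop
  have hne' : (η - ξ/2)^2 > 0 := by
    have : η - ξ/2 ≠ 0 := sub_ne_zero.mpr hne
    positivity
  have h1 : 0 < Pa (-1) := by
    have heq : Pa (-1) = (1 - r^2)^2 * (1 - ξ^2) / 4 := by rw [hPa]; ring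
    rw [heq]
    have hx : 0 < 1 - ξ^2 := by nlinarith
    have hy : 0 < (1 - r^2)^2 := by nlinarith
    exact div_pos (mul_pos hy hx) (by norm_num)
  have h3 : Pa (-r) < 0 := by
    have heq : Pa (-r) = -(r^2 * (1 - r)^4 * (η - ξ/2)^2) := by rw [hPa]; ring
    rw [heq]
    have h4 : 0 < (1 - r)^4 := pow_pos (by linarith) 4
    have := mul_pos (mul_pos (pow_pos hr0 2) h4) hne'
    linarith
  have h2 : 0 < Pa (-(r^2)) := by
    have heq : Pa (-(r^2)) = r^4 * (1 - r^2)^2 * (1 - ξ^2) / 4 := by rw [hPa]; ring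
    rw [heq]
    have hx : 0 < 1 - ξ^2 := by nlinarith
    have hy : 0 < (1 - r^2)^2 := by nlinarith
    exact div_pos (mul_pos (mul_pos (pow_pos hr0 4) hy) hx) (by norm_num)
  constructor
  · have := intermediate_value_Ioo' (a := (-1:ℝ)) (b := -r) (by linarith) hcont.continuousOn
    obtain ⟨s, hs, hs0⟩ := this ⟨h3, h1⟩
    exact ⟨s, hs, hs0⟩
  · have := intermediate_value_Ioo (a := (-r:ℝ)) (b := -(r^2)) (by linarith) hcont.continuousOn
    obtain ⟨s, hs, hs0⟩ := this ⟨h3, h2⟩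
    exact ⟨s, hs, hs0⟩
end

section
/- Let 1/9 < α < 1, (ξ,η) in the interior of the hexagon with η = ξ/2. Then Π_α(s) = (s+√α)²·[(s-z_+)(s-z_-) - η²(s-√α)²], so s = -√α is a zero of Π_α of multiplicity at least 2. -/
/-! On the diagonal `ξ = 2η` the coupling term collapses to `η (α - s²) = η (√α - s)(√α + s)`,
so both summands of `Π_α` carry the factor `(s + √α)²`; a function of the form
`(s + a)² g(s)` with `g` differentiable vanishes to second order at `-a`. -/

theorem diagonal_coupling_eq {K : Type*} [Field K] [NeZero (2 : K)] {α r : K}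
    (hr : r ^ 2 = α) (η s : K) :
    η * (s + 1) * (s + α) - 2 * η * s * (s + (1 + α) / 2) = η * (r - s) * (r + s) := by
  subst hr
  field_simp
  ring

section DoubleZero

variable {𝕜 : Type*} [NontriviallyNormedField 𝕜] {g : 𝕜 → 𝕜} {a : 𝕜}

theorem deriv_add_sq_mul_eq_zero (hg : DifferentiableAt 𝕜 g (-a)) :
    deriv (fun s => (s + a) ^ 2 * g s) (-a) = 0 := by
  have hsq : HasDerivAt (fun s => (s + a) ^ 2) 0 (-a) := by
    simpa using ((hasDerivAt_id (-a)).add_const a).fun_pow 2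
  rw [(hsq.fun_mul hg.hasDerivAt).deriv]
  simp

end DoubleZero

theorem Pi_alpha_factorization_on_diagonal_general (α ξ η : ℝ) (hα1 : 1/9 < α)
    (hdiag : η = ξ/2) :
    let Pa : ℝ → ℝ := fun s =>
      (s + Real.sqrt α)^2 * (s^2 + ((3 - 2*Real.sqrt α + 3*α)/4)*s + α)
        - (η*(s+1)*(s+α) - ξ*s*(s+(1+α)/2))^2
    (∀ s : ℝ, Pa s = (s + Real.sqrt α)^2 *
        ((s^2 + ((3 - 2*Real.sqrt α + 3*α)/4)*s + α) - η^2*(s - Real.sqrt α)^2)) ∧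
    Pa (-Real.sqrt α) = 0 ∧ deriv Pa (-Real.sqrt α) = 0 := by
  intro Pa
  have hr : Real.sqrt α ^ 2 = α := Real.sq_sqrt (by linarith)
  obtain rfl : ξ = 2 * η := by linarith
  have hfact : ∀ s, Pa s = (s + Real.sqrt α)^2 *
      ((s^2 + ((3 - 2*Real.sqrt α + 3*α)/4)*s + α) - η^2*(s - Real.sqrt α)^2) := by
    intro s
    simp only [Pa, diagonal_coupling_eq hr]
    ring
  refine ⟨hfact, by rw [hfact]; ring, ?_⟩
  rw [show Pa = _ from funext hfact]
  exact deriv_add_sq_mul_eq_zero (by fun_prop)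

/-- For `1/9 < α < 1` and `(ξ,η)` in the open hexagon with `η = ξ/2`, the polynomial
`Π_α(s)` factors as `(s+√α)²·[(s-z_+)(s-z_-) - η²(s-√α)²]`, where
`(s-z_+)(s-z_-) = s² + ((3-2√α+3α)/4)s + α`; in particular `s = -√α` is a zero of
multiplicity at least 2. -/
theorem Pi_alpha_factorization_on_diagonal (α ξ η : ℝ) (hα1 : 1/9 < α) (hα2 : α < 1)
    (hξ1 : -1 < ξ) (hξ2 : ξ < 1) (hη1 : -1 < η) (hη2 : η < 1)
    (hd1 : -1 < η - ξ) (hd2 : η - ξ < 1) (hdiag : η = ξ/2) :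
    let Pa : ℝ → ℝ := fun s =>
      (s + Real.sqrt α)^2 * (s^2 + ((3 - 2*Real.sqrt α + 3*α)/4)*s + α)
        - (η*(s+1)*(s+α) - ξ*s*(s+(1+α)/2))^2
    (∀ s : ℝ, Pa s = (s + Real.sqrt α)^2 *
        ((s^2 + ((3 - 2*Real.sqrt α + 3*α)/4)*s + α) - η^2*(s - Real.sqrt α)^2)) ∧
    Pa (-Real.sqrt α) = 0 ∧ deriv Pa (-Real.sqrt α) = 0 :=
  Pi_alpha_factorization_on_diagonal_general α ξ η hα1 hdiag
end

section
/- Let 0 < α ≤ 1/9 and z_± = -(1+3α)/4 ± (1/4)√((1-α)(1-9α)). Then for every z with Im z > 0, Im[(z²-α)/((z-z_+)(z-z_-))] > 0. -/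
/-- For `0 < α ≤ 1/9` and `z_± = -(1+3α)/4 ± (1/4)√((1-α)(1-9α))`, for every `z`
with `Im z > 0` one has `Im[(z²-α)/((z-z_+)(z-z_-))] > 0`. -/
theorem im_positive_low (α : ℝ) (h0 : 0 < α) (h1 : α ≤ 1/9) (z : ℂ) (hz : 0 < z.im) :
    let zp : ℂ := ((-(1+3*α)/4 + Real.sqrt ((1-α)*(1-9*α))/4 : ℝ) : ℂ)
    let zm : ℂ := ((-(1+3*α)/4 - Real.sqrt ((1-α)*(1-9*α))/4 : ℝ) : ℂ)
    0 < ((z^2 - (α:ℂ)) / ((z - zp) * (z - zm))).im := by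
  intro zp zm
  have hα1 : (0:ℝ) ≤ 1 - α := by linarith
  have hα9 : (0:ℝ) ≤ 1 - 9*α := by linarith
  have hsq : Real.sqrt ((1-α)*(1-9*α)) ^ 2 = (1-α)*(1-9*α) :=
    Real.sq_sqrt (mul_nonneg hα1 hα9)
  set s : ℝ := Real.sqrt ((1-α)*(1-9*α)) with hs
  have hsqC : (s:ℂ)^2 = ((1:ℂ)-α)*(1-9*α) := by
    have := congrArg (Complex.ofReal) hsq
    push_cast at this ⊢
    exact this
  have hD : (z - zp) * (z - zm) = z^2 + (((1+3*α)/2 : ℝ) : ℂ) * z + (α:ℂ) := by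
    simp only [zp, zm]
    push_cast
    linear_combination (-(1:ℂ)/16) * hsqC
  -- nonvanishing of denominator
  have hzp : (z - zp).im = z.im := by simp [zp]
  have hzm : (z - zm).im = z.im := by simp [zm]
  have hne : (z - zp) * (z - zm) ≠ 0 := by
    apply mul_ne_zero <;>
    · intro h
      rw [Complex.ext_iff] at h
      simp only [Complex.zero_im] at h
      first
        | (rw [hzp] at h; exact hz.ne' h.2)
        | (rw [hzm] at h; exact hz.ne' h.2)
  have hnorm : 0 < Complex.normSq ((z - zp) * (z - zm)) := Complex.normSq_pos.mpr hne
  rw [Complex.div_im]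
  rw [div_sub_div_same]
  apply div_pos _ hnorm
  rw [hD]
  set x := z.re
  set y := z.im
  simp only [Complex.add_re, Complex.add_im, Complex.mul_re, Complex.mul_im,
    Complex.sub_re, Complex.sub_im, Complex.ofReal_re, Complex.ofReal_im, pow_two]
  ring_nf
  nlinarith [sq_nonneg ((1+3*α)*x + 4*α), mul_nonneg hα1 hα9, mul_pos hz hz,
    mul_pos (mul_pos hz hz) hz, mul_pos h0 hz, sq_nonneg x, sq_nonneg y,
    mul_pos h0 (mul_pos hz hz),
    mul_nonneg (mul_nonneg h0.le hz.le) (mul_nonneg hα1 hα9),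
    mul_nonneg hz.le (sq_nonneg ((1+3*α)*x + 4*α))]
end

section
/- Let α ∈ (0,1], N ∈ ℕ, and 0 ≤ n ≤ 2N. Then the n×n moment matrix M_n with entries (M_n)_{j,k} = (1/2πi)∮_γ z^{j+k}·(z+1)^N(z+α)^N/z^{2N} dz (γ a positively oriented circle around 0), i.e. (M_n)_{j,k} equals the coefficient of z^{2N-1-j-k} in (z+1)^N(z+α)^N, is invertible. -/
/-!
If `M *ᵥ v = 0` with `v ≠ 0`, put `x = ∑ₖ vₖ Xᵏ` and `q = x * p`, where
`p = (X + 1)ᴺ (X + α)ᴺ`. The equations `M *ᵥ v = 0` say that the `n` coefficients of `q` in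
degrees `2N - n, …, 2N - 1` vanish, so `q`, of degree `< 2N + n`, has at most `2N` nonzero
coefficients. But `q` inherits the `2N` negative roots of `p`, and by Descartes' rule of signs
(applied to `q(-X)`) a nonzero polynomial has fewer negative roots than nonzero coefficients.
-/

open Matrix

namespace Polynomial

section Semiring

variable {R : Type*} [Semiring R]

theorem length_filter_coeffList_ne_zero [DecidableEq R] (P : R[X]) :
    (P.coeffList.filter (· ≠ 0)).length = P.support.card := by
  have hsupp : P.support = (Finset.range P.degree.succ).filter (P.coeff · ≠ 0) := by
    ext n
    rw [Finset.mem_filter, Finset.mem_range, mem_support_iff, iff_and_self]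
    intro hn
    rw [withBotSucc_degree_eq_natDegree_add_one (fun h => hn (by rw [h, coeff_zero]))]
    exact Nat.lt_succ_of_le (le_natDegree_of_ne_zero hn)
  rw [hsupp, coeffList, List.filter_map, List.length_map, List.filter_reverse, List.length_reverse]
  rfl

theorem signVariations_lt_card_support [LinearOrder R] {P : R[X]} (hP : P ≠ 0) :
    P.signVariations < P.support.card := by
  have hlen : ((P.coeffList.map SignType.sign).filter (· ≠ 0)).length = P.support.card := by
    rw [List.filter_map, List.length_map, ← length_filter_coeffList_ne_zero]
    congr 2
    ext a
    simp
  have hdestutter := (List.destutter_sublist (· ≠ ·) _).length_le.trans hlen.le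
  have hpos : 0 < P.support.card := Finset.card_pos.2 (support_nonempty.2 hP)
  unfold signVariations
  omega

theorem card_support_le_of_coeff_eq_zero {q : R[X]} {a b c : ℕ} (hq : q.natDegree < a)
    (hca : c ≤ a) (hgap : ∀ i ∈ Finset.Ico b c, q.coeff i = 0) :
    q.support.card ≤ a - (c - b) := by
  have hsub : q.support ⊆ Finset.range a \ Finset.Ico b c := fun i hi =>
    Finset.mem_sdiff.2 ⟨Finset.mem_range.2 ((le_natDegree_of_mem_supp i hi).trans_lt hq),
      fun hi' => mem_support_iff.1 hi (hgap i hi')⟩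
  have hIco : Finset.Ico b c ⊆ Finset.range a := fun i hi =>
    Finset.mem_range.2 ((Finset.mem_Ico.1 hi).2.trans_le hca)
  have hcard := Finset.card_le_card hsub
  rwa [Finset.card_sdiff_of_subset hIco, Nat.card_Ico, Finset.card_range] at hcard

/-- The `(j, k)` entry is the residue at `0` of `z ^ (j + k) * p z / z ^ d`, i.e.
`(2πi)⁻¹ ∮ z ^ (j + k) p(z) z ^ (-d) dz`. -/
noncomputable def momentMatrix (p : R[X]) (d n : ℕ) : Matrix (Fin n) (Fin n) R :=
  Matrix.of fun j k => (X ^ ((j : ℕ) + k) * p).coeff (d - 1)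

theorem momentMatrix_eq_ite (p : R[X]) {d n : ℕ} (hn : n ≤ d) :
    momentMatrix p d n =
      Matrix.of fun j k : Fin n => if (j : ℕ) + k < d then p.coeff (d - 1 - (j + k)) else 0 := by
  ext j k
  rw [momentMatrix, Matrix.of_apply, Matrix.of_apply, coeff_X_pow_mul']
  exact if_congr (by omega) rfl rfl

end Semiring

section CommRing

variable {R : Type*} [CommRing R]

theorem coeff_comp_neg_X (p : R[X]) (n : ℕ) :
    (p.comp (-X)).coeff n = (-1) ^ n * p.coeff n := by
  induction p using Polynomial.induction_on' with
  | add p q hp hq => rw [add_comp, coeff_add, coeff_add, hp, hq, mul_add]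
  | monomial k a =>
    have hneg : (-X : R[X]) ^ k = C ((-1) ^ k) * X ^ k := by rw [neg_pow, C_pow, C_neg, C_1]
    rw [← C_mul_X_pow_eq_monomial, mul_comp, C_comp, X_pow_comp, hneg, ← mul_assoc, ← C_mul,
      coeff_C_mul_X_pow, coeff_C_mul_X_pow]
    split_ifs with h
    · subst h
      ring
    · rw [mul_zero]

theorem support_comp_neg_X (p : R[X]) : (p.comp (-X)).support = p.support := by
  ext n
  simp [coeff_comp_neg_X]

theorem momentMatrix_mulVec [DecidableEq R] (p : R[X]) {d n : ℕ} (v : Fin n → R) (j : Fin n)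
    (hj : (j : ℕ) < d) :
    (momentMatrix p d n *ᵥ v) j = (ofFn n v * p).coeff (d - 1 - j) := by
  have hpoly : ofFn n v * p = ∑ k : Fin n, C (v k) * (X ^ (k : ℕ) * p) := by
    rw [ofFn_eq_sum_monomial, Finset.sum_mul]
    refine Finset.sum_congr rfl fun k _ => ?_
    rw [← C_mul_X_pow_eq_monomial, mul_assoc]
  rw [hpoly, finsetSum_coeff, mulVec, dotProduct]
  refine Finset.sum_congr rfl fun k _ => ?_
  rw [momentMatrix, Matrix.of_apply, coeff_C_mul, pow_add, mul_assoc, coeff_X_pow_mul',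
    if_pos (by omega), mul_comm]

end CommRing

section OrderedRing

variable {R : Type*} [CommRing R] [LinearOrder R] [IsStrictOrderedRing R]

theorem roots_countP_neg_lt_card_support {P : R[X]} (hP : P ≠ 0) :
    P.roots.countP (· < 0) < P.support.card := by
  have h := (roots_countP_pos_le_signVariations (P.comp (-X))).trans_lt
    (signVariations_lt_card_support (comp_neg_X_eq_zero_iff.not.2 hP))
  rw [roots_comp_neg_X, Multiset.countP_map, support_comp_neg_X] at h
  simpa [Multiset.countP_eq_card_filter] using h

theorem roots_countP_neg_lt_card_support_of_dvd {p q : R[X]} (hpq : p ∣ q) (hq : q ≠ 0) :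
    p.roots.countP (· < 0) < q.support.card :=
  (Multiset.countP_le_of_le _ (roots.le_of_dvd hq hpq)).trans_lt
    (roots_countP_neg_lt_card_support hq)

theorem exists_coeff_mul_ne_zero_of_roots_countP_neg_eq_natDegree {p x : R[X]}
    (hp : p.roots.countP (· < 0) = p.natDegree) (hx : x ≠ 0) {n : ℕ} (hxn : x.natDegree < n)
    (hn : n ≤ p.natDegree) :
    ∃ j < n, (x * p).coeff (p.natDegree - 1 - j) ≠ 0 := by
  by_contra! hgap
  have hp0 : p ≠ 0 := fun h => by rw [h, natDegree_zero] at hn; omega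
  have hcard : (x * p).support.card ≤ p.natDegree + n - (p.natDegree - (p.natDegree - n)) := by
    refine card_support_le_of_coeff_eq_zero (by rw [natDegree_mul hx hp0]; omega) (by omega)
      fun i hi => ?_
    rw [Finset.mem_Ico] at hi
    have hi' : p.natDegree - 1 - (p.natDegree - 1 - i) = i := by omega
    simpa [hi'] using hgap (p.natDegree - 1 - i) (by omega)
  have hroots := roots_countP_neg_lt_card_support_of_dvd (dvd_mul_left p x) (mul_ne_zero hx hp0)
  omega

end OrderedRing

section Field

variable {K : Type*} [Field K] [LinearOrder K] [IsStrictOrderedRing K]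

theorem isUnit_momentMatrix {p : K[X]} (hp : p.roots.countP (· < 0) = p.natDegree) {n : ℕ}
    (hn : n ≤ p.natDegree) : IsUnit (momentMatrix p p.natDegree n) := by
  rw [isUnit_iff_isUnit_det, isUnit_iff_ne_zero, ne_eq, ← exists_mulVec_eq_zero_iff]
  rintro ⟨v, hv, hMv⟩
  have hx : ofFn n v ≠ 0 := fun h => hv (injective_ofFn n (h.trans (ofFn_zero n).symm))
  obtain ⟨j, hj, hne⟩ := exists_coeff_mul_ne_zero_of_roots_countP_neg_eq_natDegree hp hx
    (ofFn_natDegree_lt (Nat.one_le_iff_ne_zero.2 (ne_zero_of_ofFn_ne_zero hx)) v) hn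
  rw [← momentMatrix_mulVec p v ⟨j, hj⟩ (by omega), hMv] at hne
  exact hne rfl

theorem roots_countP_neg_X_add_C_pow_mul_pow {a b : K} (ha : 0 < a) (hb : 0 < b) (l m : ℕ) :
    ((X + C a) ^ l * (X + C b) ^ m).roots.countP (· < 0) =
      ((X + C a) ^ l * (X + C b) ^ m).natDegree := by
  have ha' := pow_ne_zero l (X_add_C_ne_zero a)
  have hb' := pow_ne_zero m (X_add_C_ne_zero b)
  rw [roots_mul (mul_ne_zero ha' hb'), roots_pow, roots_pow, roots_X_add_C, roots_X_add_C,
    natDegree_mul ha' hb', natDegree_pow, natDegree_pow, natDegree_X_add_C, natDegree_X_add_C]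
  simp [← Multiset.cons_zero, Multiset.countP_cons_of_pos, ha, hb]

end Field

end Polynomial

open Polynomial

theorem moment_matrix_invertible_general (α : ℝ) (hα0 : 0 < α) (N n : ℕ)
    (hn : n ≤ 2*N) :
    IsUnit (Matrix.of (fun j k : Fin n =>
      if (j:ℕ) + (k:ℕ) < 2*N
        then ((Polynomial.X + 1)^N * (Polynomial.X + Polynomial.C α)^N).coeff
              (2*N - 1 - ((j:ℕ) + (k:ℕ)))
        else 0) : Matrix (Fin n) (Fin n) ℝ) := by
  set p : ℝ[X] := (X + C 1) ^ N * (X + C α) ^ N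
  have hdeg : p.natDegree = 2 * N := by
    rw [natDegree_mul (pow_ne_zero _ (X_add_C_ne_zero 1)) (pow_ne_zero _ (X_add_C_ne_zero α)),
      natDegree_pow, natDegree_pow, natDegree_X_add_C, natDegree_X_add_C]
    ring
  rw [← C_1, ← momentMatrix_eq_ite _ hn, ← hdeg]
  exact isUnit_momentMatrix (roots_countP_neg_X_add_C_pow_mul_pow one_pos hα0 N N) (hdeg ▸ hn)

/-- For `α ∈ (0,1]`, `N ∈ ℕ` and `0 ≤ n ≤ 2N`, the `n×n` moment matrix with entries
`(M_n)_{j,k} = (1/2πi)∮_γ z^{j+k}(z+1)^N(z+α)^N z^{-2N} dz`, i.e. the coefficient of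
`z^{2N-1-j-k}` in `(z+1)^N(z+α)^N` (and `0` when `j+k ≥ 2N`), is invertible. -/
theorem moment_matrix_invertible (α : ℝ) (hα0 : 0 < α) (hα1 : α ≤ 1) (N n : ℕ)
    (hn : n ≤ 2*N) :
    IsUnit (Matrix.of (fun j k : Fin n =>
      if (j:ℕ) + (k:ℕ) < 2*N
        then ((Polynomial.X + 1)^N * (Polynomial.X + Polynomial.C α)^N).coeff
              (2*N - 1 - ((j:ℕ) + (k:ℕ)))
        else 0) : Matrix (Fin n) (Fin n) ℝ) :=
  moment_matrix_invertible_general α hα0 N n hn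
end

section
/- Let α ∈ (0,1] and N ∈ ℕ. For each n with 0 ≤ n ≤ 2N there exists a unique monic polynomial p_n of degree n with complex coefficients such that for all j with 0 ≤ j ≤ n-1, (1/2πi)∮_γ p_n(z) z^j (z+1)^N(z+α)^N/z^{2N} dz = 0. Moreover if n ≤ 2N-1, then κ_n = (1/2πi)∮_γ (p_n(z))² (z+1)^N(z+α)^N/z^{2N} dz ≠ 0. -/
open Polynomial in
/-- The operator `θ - j` where `θ = z d/dz`. -/
noncomputable def Th (j : ℕ) (p : Polynomial ℝ) : Polynomial ℝ :=
  X * derivative p - C (j : ℝ) * p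

open Polynomial Multiset in
lemma Th_coeff (j : ℕ) (p : Polynomial ℝ) (m : ℕ) :
    (Th j p).coeff m = ((m : ℝ) - j) * p.coeff m := by
  unfold Th
  rw [coeff_sub, coeff_C_mul]
  cases m with
  | zero => simp
  | succ k =>
      rw [coeff_X_mul, coeff_derivative]
      push_cast
      ring

open Polynomial in
lemma Th_dvd (j : ℕ) (p : Polynomial ℝ) (x : ℝ) (m : ℕ)
    (h : (X - C x) ^ m ∣ p) : (X - C x) ^ (m - 1) ∣ Th j p := by
  obtain ⟨q, rfl⟩ := h
  cases m with
  | zero => simpa using dvd_refl _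
  | succ k =>
      have hd : derivative ((X - C x) ^ (k+1) * q)
          = C ((k:ℝ)+1) * (X - C x) ^ k * q + (X - C x) ^ (k+1) * derivative q := by
        rw [derivative_mul, derivative_pow, derivative_X_sub_C]
        push_cast
        ring
      refine ⟨C ((k:ℝ)+1) * (X * q) + (X - C x) * (X * derivative q - C (j:ℝ) * q), ?_⟩
      unfold Th
      rw [hd]
      simp only [Nat.add_sub_cancel]
      ring

open Polynomial Set in
lemma Th_rolle (j : ℕ) (p : Polynomial ℝ) {x y : ℝ} (hxy : x < y) (hy : y < 0)
    (hpx : p.eval x = 0) (hpy : p.eval y = 0) :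
    ∃ z ∈ Ioo x y, (Th j p).eval z = 0 := by
  set u : ℝ → ℝ := fun t => p.eval t * t ^ (-(j:ℤ)) with hu
  have hcont : ContinuousOn u (Icc x y) := by
    apply ContinuousOn.mul (p.continuousOn_aeval.congr ?_)
    · exact (continuousOn_id.zpow₀ _ (fun t ht => Or.inl (by
        have := ht.2.trans_lt hy; exact this.ne)))
    · intro t ht; simp [aeval_def, eval₂_eq_eval_map]
  have huxy : u x = u y := by simp [hu, hpx, hpy]
  obtain ⟨z, hz, hz0⟩ := exists_deriv_eq_zero hxy hcont huxy
  refine ⟨z, hz, ?_⟩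
  have hzne : z ≠ 0 := ((hz.2.trans hy).ne)
  have hder : HasDerivAt u
      (p.derivative.eval z * z ^ (-(j:ℤ)) + p.eval z * (((-(j:ℤ)) : ℝ) * z ^ (-(j:ℤ) - 1))) z := by
    have := (p.hasDerivAt z).mul (hasDerivAt_zpow (-(j:ℤ)) z (Or.inl hzne))
    exact this.congr_deriv (by push_cast; ring)
  have h0 : p.derivative.eval z * z ^ (-(j:ℤ)) + p.eval z * ((-(j:ℤ)) * z ^ (-(j:ℤ) - 1)) = 0 := by
    rw [← hder.deriv]; exact hz0
  have h1 := congrArg (· * z ^ ((j:ℤ) + 1)) h0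
  simp only [add_mul, mul_assoc, zero_mul] at h1
  rw [← zpow_add₀ hzne, ← zpow_add₀ hzne] at h1
  norm_num at h1
  unfold Th
  simp only [eval_sub, eval_mul, eval_X, eval_C]
  linarith [h1]

open Polynomial Multiset in
/-- number of negative roots, with multiplicity -/
noncomputable def nuneg (p : Polynomial ℝ) : ℕ :=
  Multiset.card (p.roots.filter (fun x => x < 0))

open Polynomial Multiset in
lemma nuneg_Th (j : ℕ) (p : Polynomial ℝ) (hT : Th j p ≠ 0) :
    nuneg p ≤ nuneg (Th j p) + 1 := by
  have hp : p ≠ 0 := by rintro rfl; simp [Th] at hT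
  set P : Multiset ℝ := p.roots.filter (fun x => x < 0) with hP
  set Q : Multiset ℝ := (Th j p).roots.filter (fun x => x < 0) with hQ
  have hmemP : ∀ x, x ∈ P.toFinset ↔ p.eval x = 0 ∧ x < 0 := by
    intro x
    rw [Multiset.mem_toFinset, hP, Multiset.mem_filter, mem_roots hp]
    exact and_congr_left (fun _ => Iff.rfl)
  have hmemQ : ∀ x, x ∈ Q.toFinset ↔ (Th j p).eval x = 0 ∧ x < 0 := by
    intro x
    rw [Multiset.mem_toFinset, hQ, Multiset.mem_filter, mem_roots hT]
    exact and_congr_left (fun _ => Iff.rfl)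
  have hcountP : ∀ x ∈ P.toFinset, P.count x = p.rootMultiplicity x := by
    intro x hx
    rw [hP, Multiset.count_filter, if_pos ((hmemP x).1 hx).2, count_roots]
  have hcountQ : ∀ x, x < 0 → Q.count x = (Th j p).rootMultiplicity x := by
    intro x hx
    rw [hQ, Multiset.count_filter, if_pos hx, count_roots]
  have hrm : ∀ x, p.rootMultiplicity x - 1 ≤ (Th j p).rootMultiplicity x := by
    intro x
    rw [le_rootMultiplicity_iff hT]
    exact Th_dvd j p x _ (pow_rootMultiplicity_dvd p x)
  have hinter : P.toFinset.card ≤ (Q.toFinset \ P.toFinset).card + 1 := by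
    refine Finset.card_le_diff_of_interleaved fun x hx y hy hxy _ => ?_
    obtain ⟨hpx, hx0⟩ := (hmemP x).1 hx
    obtain ⟨hpy, hy0⟩ := (hmemP y).1 hy
    obtain ⟨z, hz, hz0⟩ := Th_rolle j p hxy hy0 hpx hpy
    exact ⟨z, (hmemQ z).2 ⟨hz0, hz.2.trans hy0⟩, hz.1, hz.2⟩
  calc Multiset.card P = ∑ x ∈ P.toFinset, P.count x :=
        (Multiset.toFinset_sum_count_eq _).symm
    _ = ∑ x ∈ P.toFinset, (P.count x - 1 + 1) :=
        (Finset.sum_congr rfl fun x hx => (tsub_add_cancel_of_le <|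
          Nat.succ_le_iff.2 <| Multiset.count_pos.2 <| Multiset.mem_toFinset.1 hx).symm)
    _ = (∑ x ∈ P.toFinset, (P.count x - 1)) + P.toFinset.card := by
        simp only [Finset.sum_add_distrib, Finset.card_eq_sum_ones]
    _ ≤ (∑ x ∈ P.toFinset, Q.count x) + ((Q.toFinset \ P.toFinset).card + 1) := by
        refine add_le_add (Finset.sum_le_sum fun x hx => ?_) hinter
        rw [hcountP x hx, hcountQ x ((hmemP x).1 hx).2]
        exact hrm x
    _ ≤ (∑ x ∈ P.toFinset, Q.count x) +
          ((∑ x ∈ Q.toFinset \ P.toFinset, Q.count x) + 1) := by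
        refine add_le_add_right (add_le_add_left ((Finset.card_eq_sum_ones _).trans_le ?_) _) _
        refine Finset.sum_le_sum fun x hx => Nat.succ_le_iff.2 ?_
        rw [Multiset.count_pos, ← Multiset.mem_toFinset]
        exact (Finset.mem_sdiff.1 hx).1
    _ = Multiset.card Q + 1 := by
        rw [← add_assoc, ← Finset.sum_union Finset.disjoint_sdiff,
          Finset.union_sdiff_self_eq_union, ← Multiset.toFinset_sum_count_eq,
          ← Finset.sum_subset Finset.subset_union_right]
        intro x _ hx₂
        simpa only [Multiset.mem_toFinset, Multiset.count_eq_zero] using hx₂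

noncomputable def iterTh : ℕ → Polynomial ℝ → Polynomial ℝ
  | 0, g => g
  | k+1, g => Th k (iterTh k g)

open Polynomial Finset in
lemma iterTh_coeff (g : Polynomial ℝ) (k m : ℕ) :
    (iterTh k g).coeff m = (∏ j ∈ Finset.range k, ((m : ℝ) - j)) * g.coeff m := by
  induction k with
  | zero => simp [iterTh]
  | succ k ih =>
      rw [iterTh, Th_coeff, ih, Finset.prod_range_succ]
      ring

open Polynomial Multiset in
lemma kernel_real (N n : ℕ) (hn : n ≤ 2*N) (α : ℝ) (hα : 0 < α) (f : Polynomial ℝ)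
    (hf : f ≠ 0) (hdeg : f.natDegree < n)
    (hwin : ∀ j < n, (f * ((X + C 1)^N * (X + C α)^N)).coeff (2*N - 1 - j) = 0) : False := by
  set w : Polynomial ℝ := (X + C 1)^N * (X + C α)^N with hw
  have Mw : w.Monic := ((monic_X_add_C (1:ℝ)).pow N).mul ((monic_X_add_C α).pow N)
  set g : Polynomial ℝ := f * w with hg
  have hgne : g ≠ 0 := mul_ne_zero hf Mw.ne_zero
  set d : ℕ := f.natDegree with hd
  have hwdeg : w.natDegree = 2*N := by
    rw [hw, natDegree_mul (pow_ne_zero _ (monic_X_add_C (1:ℝ)).ne_zero)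
      (pow_ne_zero _ (monic_X_add_C α).ne_zero), natDegree_pow, natDegree_pow,
      natDegree_X_add_C, natDegree_X_add_C]
    ring
  have hgdeg : g.natDegree = d + 2*N := by
    rw [hg, natDegree_mul hf Mw.ne_zero, hwdeg]
  -- root count of g
  have h2 : (((X:Polynomial ℝ) + C 1)^N).roots = Multiset.replicate N (-1) := by
    rw [show ((X:Polynomial ℝ) + C 1) = X - C (-1) by simp, roots_pow, roots_X_sub_C,
      Multiset.nsmul_singleton]
  have h3 : (((X:Polynomial ℝ) + C α)^N).roots = Multiset.replicate N (-α) := by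
    rw [show ((X:Polynomial ℝ) + C α) = X - C (-α) by simp, roots_pow, roots_X_sub_C,
      Multiset.nsmul_singleton]
  have hroots : 2*N ≤ nuneg g := by
    have h1 : g.roots = f.roots + (((X:Polynomial ℝ) + C 1)^N).roots
        + ((X + C α)^N).roots := by
      rw [hg, hw, ← mul_assoc, roots_mul (by rw [mul_assoc, ← hw, ← hg]; exact hgne),
        roots_mul (mul_ne_zero hf (pow_ne_zero _ (monic_X_add_C (1:ℝ)).ne_zero))]
    have h4 : Multiset.filter (fun x => x < 0) (Multiset.replicate N (-1:ℝ))
        = Multiset.replicate N (-1) :=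
      Multiset.filter_eq_self.mpr (fun a ha => by
        rw [Multiset.eq_of_mem_replicate ha]; norm_num)
    have h5 : Multiset.filter (fun x => x < 0) (Multiset.replicate N (-α:ℝ))
        = Multiset.replicate N (-α) :=
      Multiset.filter_eq_self.mpr (fun a ha => by
        rw [Multiset.eq_of_mem_replicate ha]; simpa using hα)
    rw [nuneg, h1, h2, h3, Multiset.filter_add, Multiset.filter_add, h4, h5]
    simp only [Multiset.card_add, Multiset.card_replicate]
    omega
  -- nonvanishing of iterates
  have htop : ∀ k ≤ 2*N, (iterTh k g).coeff (d + 2*N) ≠ 0 := by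
    intro k hk
    rw [iterTh_coeff]
    refine mul_ne_zero (Finset.prod_ne_zero_iff.2 fun j hj => ?_) ?_
    · rw [Finset.mem_range] at hj
      have : (j : ℝ) < ((d + 2*N : ℕ) : ℝ) := by
        push_cast
        have : j < d + 2*N := by omega
        exact_mod_cast this
      linarith
    · rw [← hgdeg]; exact leadingCoeff_ne_zero.mpr hgne
  have hne : ∀ k ≤ 2*N, iterTh k g ≠ 0 := by
    intro k hk h0
    exact htop k hk (by rw [h0, coeff_zero])
  -- iterate root counts
  have hiter : ∀ k ≤ 2*N, nuneg g ≤ nuneg (iterTh k g) + k := by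
    intro k hk
    induction k with
    | zero => simp [iterTh]
    | succ k ih =>
        have h1 := ih (by omega)
        have h2 : Th k (iterTh k g) ≠ 0 := hne (k+1) hk
        have h3 := nuneg_Th k (iterTh k g) h2
        show nuneg g ≤ nuneg (Th k (iterTh k g)) + (k+1)
        omega
  set G : Polynomial ℝ := iterTh (2*N - n) g with hG
  have hGne : G ≠ 0 := hne _ (by omega)
  have hn1 : 1 ≤ n := by omega
  -- low coefficients of G vanish
  have hlow : ∀ m < 2*N, G.coeff m = 0 := by
    intro m hm
    rw [hG, iterTh_coeff]
    by_cases hcase : m < 2*N - n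
    · rw [Finset.prod_eq_zero (Finset.mem_range.mpr hcase) (by rw [sub_self]), zero_mul]
    · have hj : 2*N - 1 - m < n := by omega
      have := hwin (2*N - 1 - m) hj
      rw [show 2*N - 1 - (2*N - 1 - m) = m by omega] at this
      rw [this, mul_zero]
  obtain ⟨B, hB⟩ : (X:Polynomial ℝ)^(2*N) ∣ G := X_pow_dvd_iff.mpr hlow
  have hBne : B ≠ 0 := by rintro rfl; rw [mul_zero] at hB; exact hGne hB
  have hGdegle : G.natDegree ≤ d + 2*N := by
    rw [hG]
    refine natDegree_le_iff_coeff_eq_zero.mpr fun m hm => ?_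
    rw [iterTh_coeff, coeff_eq_zero_of_natDegree_lt (by rw [hgdeg]; exact hm), mul_zero]
  have hBdeg : B.natDegree ≤ d := by
    have : G.natDegree = 2*N + B.natDegree := by
      rw [hB, natDegree_mul (pow_ne_zero _ X_ne_zero) hBne, natDegree_X_pow]
    omega
  -- nuneg G = nuneg B
  have hnuG : nuneg G = nuneg B := by
    have hz : Multiset.filter (fun x => x < 0) (Multiset.replicate (2*N) (0:ℝ)) = 0 := by
      rw [Multiset.filter_eq_nil]
      intro a ha
      rw [Multiset.eq_of_mem_replicate ha]
      norm_num
    rw [nuneg, nuneg, hB, roots_mul (by rw [← hB]; exact hGne), roots_pow, roots_X,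
      Multiset.nsmul_singleton, Multiset.filter_add, hz, Multiset.card_add,
      Multiset.card_zero, zero_add]
  have hfinal : (n:ℕ) ≤ nuneg B := by
    have := hiter (2*N - n) (by omega)
    rw [← hG] at this
    omega
  have hcard : nuneg B ≤ d := by
    calc nuneg B ≤ Multiset.card B.roots := Multiset.card_le_card (Multiset.filter_le _ _)
      _ ≤ B.natDegree := card_roots' B
      _ ≤ d := hBdeg
  omega

noncomputable def rePoly (f : Polynomial ℂ) : Polynomial ℝ :=
  ⟨AddMonoidAlgebra.ofCoeff (f.toFinsupp.coeff.mapRange Complex.re Complex.zero_re)⟩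

noncomputable def imPoly (f : Polynomial ℂ) : Polynomial ℝ :=
  ⟨AddMonoidAlgebra.ofCoeff (f.toFinsupp.coeff.mapRange Complex.im Complex.zero_im)⟩

lemma rePoly_coeff (f : Polynomial ℂ) (m : ℕ) : (rePoly f).coeff m = (f.coeff m).re := by
  rcases f with ⟨f⟩
  simp [rePoly, Polynomial.coeff]

lemma imPoly_coeff (f : Polynomial ℂ) (m : ℕ) : (imPoly f).coeff m = (f.coeff m).im := by
  rcases f with ⟨f⟩
  simp [imPoly, Polynomial.coeff]

open Polynomial in
lemma rePoly_decomp (f : Polynomial ℂ) :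
    f = (rePoly f).map Complex.ofRealHom + C Complex.I * (imPoly f).map Complex.ofRealHom := by
  ext m
  rw [coeff_add, coeff_map, coeff_C_mul, coeff_map, rePoly_coeff, imPoly_coeff]
  simp only [Complex.ofRealHom_eq_coe]
  rw [mul_comm, ← Complex.re_add_im (f.coeff m)]
  simp

open Polynomial in
lemma kernel_complex (N n : ℕ) (hn : n ≤ 2*N) (α : ℝ) (hα : 0 < α) (f : Polynomial ℂ)
    (hf : f ≠ 0) (hdeg : f.natDegree < n)
    (hwin : ∀ j < n, (f * ((X + C 1)^N * (X + C (α:ℂ))^N)).coeff (2*N - 1 - j) = 0) :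
    False := by
  set wR : Polynomial ℝ := (X + C 1)^N * (X + C α)^N with hwR
  have hmapw : wR.map Complex.ofRealHom = (X + C 1)^N * (X + C (α:ℂ))^N := by
    simp [hwR, Polynomial.map_mul, Polynomial.map_pow, Polynomial.map_add]
  have key : ∀ g : Polynomial ℝ, ∀ m : ℕ,
      ((g.map Complex.ofRealHom) * ((X + C 1)^N * (X + C (α:ℂ))^N)).coeff m
        = ((g * wR).coeff m : ℂ) := by
    intro g m
    rw [← hmapw, ← Polynomial.map_mul, coeff_map]
    rfl
  have hcond : ∀ j < n, (rePoly f * wR).coeff (2*N - 1 - j) = 0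
      ∧ (imPoly f * wR).coeff (2*N - 1 - j) = 0 := by
    intro j hj
    have h0 := hwin j hj
    rw [rePoly_decomp f, add_mul, coeff_add, mul_assoc, coeff_C_mul, key, key] at h0
    have hre := congrArg Complex.re h0
    have him := congrArg Complex.im h0
    simp [Complex.add_re, Complex.add_im] at hre him
    exact ⟨hre, him⟩
  have hdegre : (rePoly f).natDegree < n := by
    refine lt_of_le_of_lt (natDegree_le_iff_coeff_eq_zero.mpr fun m hm => ?_) hdeg
    · rw [rePoly_coeff, coeff_eq_zero_of_natDegree_lt hm, Complex.zero_re]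
  have hdegim : (imPoly f).natDegree < n := by
    refine lt_of_le_of_lt (natDegree_le_iff_coeff_eq_zero.mpr fun m hm => ?_) hdeg
    · rw [imPoly_coeff, coeff_eq_zero_of_natDegree_lt hm, Complex.zero_im]
  by_cases hre0 : rePoly f = 0
  · by_cases him0 : imPoly f = 0
    · apply hf
      rw [rePoly_decomp f, hre0, him0]
      simp
    · exact kernel_real N n hn α hα (imPoly f) him0 hdegim fun j hj => (hcond j hj).2
  · exact kernel_real N n hn α hα (rePoly f) hre0 hdegre fun j hj => (hcond j hj).1

open Polynomial in
noncomputable def condMap (N n : ℕ) (α : ℝ) : Polynomial ℂ →ₗ[ℂ] (Fin n → ℂ) where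
  toFun p := fun j => (p * ((X + C 1)^N * (X + C (α:ℂ))^N)).coeff (2*N - 1 - (j:ℕ))
  map_add' p q := by funext j; simp [add_mul]
  map_smul' c p := by funext j; simp [smul_mul_assoc]

open Polynomial in
theorem orthopoly_main (α : ℝ) (hα0 : 0 < α) (hα1 : α ≤ 1)
    (N n : ℕ) (hn : n ≤ 2*N) :
    (∃! p : Polynomial ℂ, p.Monic ∧ p.natDegree = n ∧
      ∀ j < n, (p * (Polynomial.X + 1)^N *
        (Polynomial.X + Polynomial.C (α:ℂ))^N).coeff (2*N - 1 - j) = 0) := by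
  have hC1 : ((X : Polynomial ℂ) + 1) = X + C 1 := by rw [C_1]
  set W : Polynomial ℂ := (X + C 1)^N * (X + C (α:ℂ))^N with hW
  have hform : ∀ p : Polynomial ℂ, ∀ m : ℕ,
      (p * (X + 1)^N * (X + C (α:ℂ))^N).coeff m = (p * W).coeff m := by
    intro p m
    rw [hW, hC1, mul_assoc]
  -- the linear map on degreeLT
  set Φ : (Fin n → ℂ) →ₗ[ℂ] (Fin n → ℂ) :=
    ((condMap N n α).comp (Polynomial.degreeLT ℂ n).subtype).comp
      (Polynomial.degreeLTEquiv ℂ n).symm.toLinearMap with hΦ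
  have hker : ∀ q : Polynomial ℂ, q ∈ Polynomial.degreeLT ℂ n →
      (∀ j : Fin n, (q * W).coeff (2*N - 1 - (j:ℕ)) = 0) → q = 0 := by
    intro q hq hcond
    by_contra hq0
    refine kernel_complex N n hn α hα0 q hq0 ?_ ?_
    · exact natDegree_lt_iff_degree_lt hq0 |>.mpr (Polynomial.mem_degreeLT.mp hq)
    · intro j hj
      exact hcond ⟨j, hj⟩
  have hinj : Function.Injective Φ := by
    intro v1 v2 hv
    have h0 : Φ (v1 - v2) = 0 := by rw [map_sub, hv, sub_self]
    have hq := hker (((Polynomial.degreeLTEquiv ℂ n).symm (v1 - v2)) : Polynomial ℂ)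
      ((Polynomial.degreeLTEquiv ℂ n).symm (v1 - v2)).2 (fun j => congrFun h0 j)
    have : (Polynomial.degreeLTEquiv ℂ n).symm (v1 - v2) = 0 := Subtype.ext hq
    have := congrArg (Polynomial.degreeLTEquiv ℂ n) this
    rw [LinearEquiv.apply_symm_apply, map_zero] at this
    exact sub_eq_zero.mp this
  have hsurj : Function.Surjective Φ := (LinearMap.injective_iff_surjective).mp hinj
  obtain ⟨v, hv⟩ := hsurj (fun j => -((X^n * W).coeff (2*N - 1 - (j:ℕ))))
  set q : Polynomial ℂ := ((Polynomial.degreeLTEquiv ℂ n).symm v : Polynomial ℂ) with hqdef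
  have hqlt : q.degree < n := Polynomial.mem_degreeLT.mp
    ((Polynomial.degreeLTEquiv ℂ n).symm v).2
  have hqX : q.degree < (X^n : Polynomial ℂ).degree := by rwa [degree_X_pow]
  set p : Polynomial ℂ := X^n + q with hpdef
  have hpmonic : p.Monic := by
    rw [Polynomial.Monic, hpdef, leadingCoeff_add_of_degree_lt' hqX, leadingCoeff_X_pow]
  have hpdeg : p.natDegree = n := by
    have : p.degree = (n : WithBot ℕ) := by
      rw [hpdef, degree_add_eq_left_of_degree_lt hqX, degree_X_pow]
    exact natDegree_eq_of_degree_eq_some this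
  have hpcond : ∀ j < n, (p * W).coeff (2*N - 1 - j) = 0 := by
    intro j hj
    have h1 : (q * W).coeff (2*N - 1 - j) = -((X^n * W).coeff (2*N - 1 - j)) := by
      have := congrFun hv ⟨j, hj⟩
      exact this
    rw [hpdef, add_mul, coeff_add, h1]
    ring
  refine ⟨p, ⟨hpmonic, hpdeg, fun j hj => by rw [hform]; exact hpcond j hj⟩, ?_⟩
  rintro r ⟨hrm, hrdeg, hrcond⟩
  by_contra hne
  have hsub : r - p ≠ 0 := sub_ne_zero.mpr hne
  have hdegeq : r.degree = p.degree := by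
    rw [degree_eq_natDegree hrm.ne_zero, degree_eq_natDegree hpmonic.ne_zero, hrdeg, hpdeg]
  have hdlt : (r - p).degree < n := by
    have := degree_sub_lt hdegeq hrm.ne_zero (by rw [hrm.leadingCoeff, hpmonic.leadingCoeff])
    rwa [degree_eq_natDegree hrm.ne_zero, hrdeg] at this
  refine kernel_complex N n hn α hα0 (r - p) hsub
    ((natDegree_lt_iff_degree_lt hsub).mpr hdlt) fun j hj => ?_
  rw [sub_mul, coeff_sub]
  have h1 := hrcond j hj
  rw [hform] at h1
  rw [h1, hpcond j hj, sub_zero]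

open Polynomial in
theorem orthopoly_kappa (α : ℝ) (hα0 : 0 < α) (N n : ℕ) (hn1 : n + 1 ≤ 2*N)
    (p : Polynomial ℂ)
    (hp : p.Monic ∧ p.natDegree = n ∧
        ∀ j < n, (p * (Polynomial.X + 1)^N *
          (Polynomial.X + Polynomial.C (α:ℂ))^N).coeff (2*N - 1 - j) = 0) :
    (p^2 * (Polynomial.X + 1)^N *
        (Polynomial.X + Polynomial.C (α:ℂ))^N).coeff (2*N - 1) ≠ 0 := by
  obtain ⟨hm, hdeg, hcond⟩ := hp
  have hC1 : ((X : Polynomial ℂ) + 1) = X + C 1 := by rw [C_1]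
  set W : Polynomial ℂ := (X + C 1)^N * (X + C (α:ℂ))^N with hW
  have hcond' : ∀ j < n, (p * W).coeff (2*N - 1 - j) = 0 := by
    intro j hj
    have := hcond j hj
    rwa [mul_assoc, hC1, ← hW] at this
  intro h0
  have h0' : (p * (p * W)).coeff (2*N - 1) = 0 := by
    rw [show p * (p * W) = p^2 * (X+1)^N * (X + C (α:ℂ))^N by rw [hW, hC1]; ring]
    exact h0
  have hsum : (p * (p * W)).coeff (2*N - 1) = (p * W).coeff (2*N - 1 - n) := by
    rw [coeff_mul]
    rw [Finset.sum_eq_single (n, 2*N - 1 - n)]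
    · show p.coeff n * (p * W).coeff (2*N - 1 - n) = _
      rw [← hdeg, hm.coeff_natDegree, one_mul]
    · rintro ⟨a, b⟩ hab hne
      rw [Finset.HasAntidiagonal.mem_antidiagonal] at hab
      show p.coeff a * (p * W).coeff b = 0
      rcases lt_trichotomy a n with hlt | heq | hgt
      · have hb : b = 2*N - 1 - a := by omega
        rw [hb, hcond' a hlt, mul_zero]
      · refine absurd ?_ hne
        have hb : b = 2*N - 1 - n := by omega
        rw [heq, hb]
      · rw [coeff_eq_zero_of_natDegree_lt (by rw [hdeg]; exact hgt), zero_mul]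
    · intro hni
      exact absurd (Finset.HasAntidiagonal.mem_antidiagonal.mpr (by omega)) hni
  have hfull : ∀ j < n + 1, (p * W).coeff (2*N - 1 - j) = 0 := by
    intro j hj
    rcases Nat.lt_or_ge j n with h | h
    · exact hcond' j h
    · have : j = n := by omega
      rw [this, ← hsum, h0']
  exact kernel_complex N (n+1) hn1 α hα0 p hm.ne_zero (by rw [hdeg]; omega) hfull


/-- For `α ∈ (0,1]`, `N ∈ ℕ`, and `0 ≤ n ≤ 2N`, there is a unique monic polynomial
`p_n` of degree `n` with complex coefficients satisfying
`(1/2πi)∮_γ p_n(z) z^j (z+1)^N(z+α)^N/z^{2N} dz = 0` for `0 ≤ j ≤ n-1`;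
the contour integral equals the coefficient of `z^{2N-1-j}` in
`p_n(z)(z+1)^N(z+α)^N`.  Moreover if `n ≤ 2N-1` then
`κ_n = (1/2πi)∮_γ p_n(z)² (z+1)^N(z+α)^N/z^{2N} dz`, i.e. the coefficient of
`z^{2N-1}` in `p_n(z)²(z+1)^N(z+α)^N`, is nonzero. -/
theorem orthogonal_polynomial_exists_unique (α : ℝ) (hα0 : 0 < α) (hα1 : α ≤ 1)
    (N n : ℕ) (hn : n ≤ 2*N) :
    (∃! p : Polynomial ℂ, p.Monic ∧ p.natDegree = n ∧
      ∀ j < n, (p * (Polynomial.X + 1)^N *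
        (Polynomial.X + Polynomial.C (α:ℂ))^N).coeff (2*N - 1 - j) = 0) ∧
    (n + 1 ≤ 2*N → ∀ p : Polynomial ℂ,
      (p.Monic ∧ p.natDegree = n ∧
        ∀ j < n, (p * (Polynomial.X + 1)^N *
          (Polynomial.X + Polynomial.C (α:ℂ))^N).coeff (2*N - 1 - j) = 0) →
      (p^2 * (Polynomial.X + 1)^N *
        (Polynomial.X + Polynomial.C (α:ℂ))^N).coeff (2*N - 1) ≠ 0) := by
  exact ⟨orthopoly_main α hα0 hα1 N n hn, fun h p hp => orthopoly_kappa α hα0 N n h p hp⟩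
end

section
/- Let 1/9 < α ≤ 1, θ_α ∈ [2π/3, π] with z_± = √α e^{±iθ_α}. For z = √α e^{it}, writing Q_α(z)·(iz)² for the quadratic differential along the circle, one has Q_α(√α e^{it})·(i√α e^{it})² = -16α·cos²(t/2)·sin((θ_α - t)/2)·sin((θ_α + t)/2)/(1+α+2√α cos t)². In particular this expression is negative for -θ_α < t < θ_α and positive for θ_α < |t| < π. -/
open Complex Real
set_option maxHeartbeats 1000000 in

/-- For `1/9 < α ≤ 1` and `θ_α ∈ [2π/3, π]` with `z_± = √α e^{±iθ_α}`, for
`z = √α e^{it}` one has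
`Q_α(z)·(iz)² = -16α·cos²(t/2)·sin((θ_α-t)/2)·sin((θ_α+t)/2)/(1+α+2√α cos t)²`,
where `Q_α(z) = (z+√α)²(z-z_+)(z-z_-)/(z²(z+1)²(z+α)²)`.  In particular the
right-hand side is negative for `-θ_α < t < θ_α` and positive for `θ_α < |t| < π`. -/
theorem quadratic_differential_on_circle_high (α θ t : ℝ)
    (hα1 : 1/9 < α) (hα2 : α ≤ 1)
    (hθ : θ ∈ Set.Icc (2*Real.pi/3) Real.pi) :
    let zp : ℂ := (Real.sqrt α : ℂ) * Complex.exp (Complex.I * (θ:ℂ))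
    let zm : ℂ := (Real.sqrt α : ℂ) * Complex.exp (-(Complex.I * (θ:ℂ)))
    let z : ℂ := (Real.sqrt α : ℂ) * Complex.exp (Complex.I * (t:ℂ))
    let E : ℝ := -16*α * (Real.cos (t/2))^2 * Real.sin ((θ - t)/2) * Real.sin ((θ + t)/2)
      / (1 + α + 2*Real.sqrt α * Real.cos t)^2
    ((z + (Real.sqrt α : ℂ))^2 * (z - zp) * (z - zm)
        / (z^2 * (z+1)^2 * (z + (α:ℂ))^2)) * (Complex.I * z)^2 = (E : ℂ) ∧
    (-θ < t → t < θ → E < 0) ∧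
    (θ < |t| → |t| < Real.pi → 0 < E) := by
  intro zp zm z E
  have hα0 : 0 < α := lt_trans (by norm_num) hα1
  set s : ℝ := Real.sqrt α with hs_def
  have hs0 : 0 < s := Real.sqrt_pos.mpr hα0
  have hs2 : s^2 = α := Real.sq_sqrt hα0.le
  have hs1 : s ≤ 1 := by
    rw [show (1:ℝ) = Real.sqrt 1 by simp]
    exact Real.sqrt_le_sqrt hα2
  set D : ℝ := 1 + α + 2*s*Real.cos t with hD_def
  -- rewrite E
  have h1 : Real.cos (t/2)^2 = 1/2 + Real.cos t / 2 := by
    have := Real.cos_sq (t/2); rwa [show 2*(t/2) = t by ring] at this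
  have h2 := Real.cos_sub_cos t θ
  have hE : E = -4*α*(1+Real.cos t)*(Real.cos t - Real.cos θ)/D^2 := by
    show (-16*α * (Real.cos (t/2))^2 * Real.sin ((θ - t)/2) * Real.sin ((θ + t)/2)) / D^2
      = _
    congr 1
    rw [show (θ-t)/2 = -((t-θ)/2) by ring, Real.sin_neg,
      show (θ+t)/2 = (t+θ)/2 by ring]
    linear_combination (16*α*Real.sin ((t+θ)/2)*Real.sin ((t-θ)/2)) * h1
      + (4*α*(1+Real.cos t)) * h2
  -- positivity of D given cos t > -1
  have hDpos : Real.cos t > -1 → 0 < D := by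
    intro hct
    have h2s : 2*s ≤ 1 + α := by nlinarith
    nlinarith
  refine ⟨?_, ?_, ?_⟩
  · -- the identity
    by_cases hD : D = 0
    · -- degenerate case : α = 1, cos t = -1
      have hct : Real.cos t = -1 := by nlinarith [Real.neg_one_le_cos t, Real.cos_le_one t]
      have hD' : 1 + α + 2*s*Real.cos t = 0 := by rw [← hD_def]; exact hD
      have hsone : s = 1 := by nlinarith
      have hα : α = 1 := by nlinarith
      have hst : Real.sin t = 0 := by
        have := Real.sin_sq_add_cos_sq t
        nlinarith
      have hz : z = -1 := by
        show (s:ℂ) * Complex.exp (Complex.I * (t:ℂ)) = -1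
        rw [mul_comm Complex.I, Complex.exp_mul_I]
        have : s = 1 := by rw [hs_def, hα, Real.sqrt_one]
        rw [this, ← Complex.ofReal_cos, ← Complex.ofReal_sin, hct, hst]
        simp
      have hE0 : E = 0 := by rw [hE, hD]; simp
      rw [hE0, hz]
      simp
    · -- main case
      have hw0 : Complex.exp (Complex.I * (t:ℂ)) ≠ 0 := Complex.exp_ne_zero _
      have hv0 : Complex.exp (Complex.I * (θ:ℂ)) ≠ 0 := Complex.exp_ne_zero _
      have hs0c : (s:ℂ) ≠ 0 := by exact_mod_cast hs0.ne'
      have hcost : (Real.cos t : ℂ)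
          = (Complex.exp (Complex.I*t) + (Complex.exp (Complex.I*t))⁻¹)/2 := by
        rw [Complex.ofReal_cos, Complex.cos, neg_mul, Complex.exp_neg, mul_comm (t:ℂ) Complex.I]
      have hcosθ : (Real.cos θ : ℂ)
          = (Complex.exp (Complex.I*θ) + (Complex.exp (Complex.I*θ))⁻¹)/2 := by
        rw [Complex.ofReal_cos, Complex.cos, neg_mul, Complex.exp_neg, mul_comm (θ:ℂ) Complex.I]
      have hαc : (α:ℂ) = (s:ℂ)^2 := by rw [← hs2]; push_cast; ring
      have hDc0 : ((D:ℝ):ℂ) ≠ 0 := Complex.ofReal_ne_zero.mpr hD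
      have hDc : ((D:ℝ):ℂ) = 1 + (s:ℂ)^2
          + (s:ℂ)*(Complex.exp (Complex.I*t) + (Complex.exp (Complex.I*t))⁻¹) := by
        rw [hD_def]; push_cast [hcost, hαc]; ring
      have hprod : ((s:ℂ)*Complex.exp (Complex.I*t) + 1)
            * ((s:ℂ)*Complex.exp (Complex.I*t) + (α:ℂ))
          = (s:ℂ) * Complex.exp (Complex.I*t) * ((D:ℝ):ℂ) := by
        rw [hDc, hαc]; field_simp; ring
      have hrhs0 : (s:ℂ) * Complex.exp (Complex.I*t) * ((D:ℝ):ℂ) ≠ 0 :=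
        mul_ne_zero (mul_ne_zero hs0c hw0) hDc0
      rw [← hprod] at hrhs0
      have hz1 : (s:ℂ)*Complex.exp (Complex.I*t) + 1 ≠ 0 := left_ne_zero_of_mul hrhs0
      have hzα : (s:ℂ)*Complex.exp (Complex.I*t) + (α:ℂ) ≠ 0 := right_ne_zero_of_mul hrhs0
      show ((s:ℂ) * Complex.exp (Complex.I*t) + (s:ℂ))^2
            * ((s:ℂ) * Complex.exp (Complex.I*t) - (s:ℂ) * Complex.exp (Complex.I*θ))
            * ((s:ℂ) * Complex.exp (Complex.I*t) - (s:ℂ) * Complex.exp (-(Complex.I*θ)))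
          / (((s:ℂ) * Complex.exp (Complex.I*t))^2
            * ((s:ℂ) * Complex.exp (Complex.I*t) + 1)^2
            * ((s:ℂ) * Complex.exp (Complex.I*t) + (α:ℂ))^2)
          * (Complex.I * ((s:ℂ) * Complex.exp (Complex.I*t)))^2 = ((E:ℝ):ℂ)
      rw [hE]
      push_cast [hcost, hcosθ, hαc, Complex.exp_neg]
      rw [hαc] at hzα
      have hden1 : ((s:ℂ)*Complex.exp (Complex.I*t))^2
          * ((s:ℂ)*Complex.exp (Complex.I*t) + 1)^2
          * ((s:ℂ)*Complex.exp (Complex.I*t) + (s:ℂ)^2)^2 ≠ 0 :=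
        mul_ne_zero (mul_ne_zero (pow_ne_zero _ (mul_ne_zero hs0c hw0))
          (pow_ne_zero _ hz1)) (pow_ne_zero _ hzα)
      have hD2 : ((D:ℝ):ℂ)^2 ≠ 0 := pow_ne_zero _ hDc0
      rw [show (Complex.I * ((s:ℂ)*Complex.exp (Complex.I*t)))^2
        = -((s:ℂ)*Complex.exp (Complex.I*t))^2 from by
          rw [mul_pow, Complex.I_sq]; ring]
      rw [div_mul_eq_mul_div, div_eq_div_iff hden1 hD2, hDc]
      field_simp [hw0, hv0]
      ring
  · intro h1t h2t
    have habs : |t| < θ := abs_lt.mpr ⟨h1t, h2t⟩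
    have hθπ : θ ≤ Real.pi := hθ.2
    have hθ0 : 0 < θ := lt_of_lt_of_le (by positivity) hθ.1
    have hct : Real.cos θ < Real.cos t := by
      rw [← Real.cos_abs t]
      exact Real.cos_lt_cos_of_nonneg_of_le_pi (abs_nonneg t) hθπ habs
    have hct1 : -1 < Real.cos t := by
      rw [← Real.cos_abs t, ← Real.cos_pi]
      exact Real.cos_lt_cos_of_nonneg_of_le_pi (abs_nonneg t) le_rfl
        (lt_of_lt_of_le habs hθπ)
    have hD0 := hDpos hct1
    rw [hE]
    have : 0 < 1 + Real.cos t := by linarith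
    have h4 : 0 < Real.cos t - Real.cos θ := by linarith
    have hnum : -4*α*(1+Real.cos t)*(Real.cos t - Real.cos θ) < 0 := by
      nlinarith [mul_pos (mul_pos hα0 this) h4]
    exact div_neg_of_neg_of_pos hnum (pow_pos hD0 2)
  · intro h1t h2t
    have hθπ : θ ≤ Real.pi := hθ.2
    have hθ0 : 0 ≤ θ := le_trans (by positivity) hθ.1
    have hct : Real.cos t < Real.cos θ := by
      rw [← Real.cos_abs t]
      exact Real.cos_lt_cos_of_nonneg_of_le_pi hθ0 h2t.le h1t
    have hct1 : -1 < Real.cos t := by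
      rw [← Real.cos_abs t, ← Real.cos_pi]
      exact Real.cos_lt_cos_of_nonneg_of_le_pi (abs_nonneg t) le_rfl h2t
    have hD0 := hDpos hct1
    rw [hE]
    have : 0 < 1 + Real.cos t := by linarith
    have h4 : Real.cos t - Real.cos θ < 0 := by linarith
    have hnum : 0 < -4*α*(1+Real.cos t)*(Real.cos t - Real.cos θ) := by
      nlinarith [mul_neg_of_pos_of_neg (mul_pos hα0 this) h4]
    exact div_pos hnum (pow_pos hD0 2)
end

section
/- Let 0 < α < 1/9 and z_± = -(1+3α)/4 ± (1/4)√((1-α)(1-9α)). For z = √α e^{it} with z'(t) = iz(t), one has Q_α(z)(z')² = -((1+3α)/2 + 2√α cos t)²/(1+α+2√α cos t)², which is strictly negative for all t ∈ [-π,π]. Hence the full circle |z| = √α is a trajectory of the quadratic differential Q_α(z)dz². -/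
/-- For `0 < α < 1/9` with `z_± = -(1+3α)/4 ± (1/4)√((1-α)(1-9α))` and
`z = √α e^{it}`, `z' = iz`, one has
`Q_α(z)(z')² = -((1+3α)/2 + 2√α cos t)²/(1+α+2√α cos t)²`,
where `Q_α(z) = (z-z_+)²(z-z_-)²/(z²(z+1)²(z+α)²)`, and this is strictly negative
for all `t ∈ [-π,π]`; hence the full circle `|z| = √α` is a trajectory of the
quadratic differential `Q_α(z)dz²`. -/
theorem quadratic_differential_on_circle_low (α t : ℝ)
    (hα0 : 0 < α) (hα1 : α < 1/9)
    (ht : t ∈ Set.Icc (-Real.pi) Real.pi) :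
    let zp : ℂ := ((-(1+3*α)/4 + Real.sqrt ((1-α)*(1-9*α))/4 : ℝ) : ℂ)
    let zm : ℂ := ((-(1+3*α)/4 - Real.sqrt ((1-α)*(1-9*α))/4 : ℝ) : ℂ)
    let z : ℂ := (Real.sqrt α : ℂ) * Complex.exp (Complex.I * (t:ℂ))
    ((z - zp)^2 * (z - zm)^2 / (z^2 * (z+1)^2 * (z + (α:ℂ))^2)) * (Complex.I * z)^2
      = ((-((1+3*α)/2 + 2*Real.sqrt α * Real.cos t)^2
          / (1 + α + 2*Real.sqrt α * Real.cos t)^2 : ℝ) : ℂ) ∧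
    -((1+3*α)/2 + 2*Real.sqrt α * Real.cos t)^2
        / (1 + α + 2*Real.sqrt α * Real.cos t)^2 < 0 := by
  intro zp zm z
  have hs0 : 0 < Real.sqrt α := Real.sqrt_pos.mpr hα0
  have hs2 : Real.sqrt α * Real.sqrt α = α := Real.mul_self_sqrt hα0.le
  have hs13 : Real.sqrt α < 1/3 := by nlinarith
  have hcos1 : -1 ≤ Real.cos t := Real.neg_one_le_cos t
  have hdisc : 0 ≤ (1-α)*(1-9*α) := by nlinarith
  have hr2 : Real.sqrt ((1-α)*(1-9*α)) * Real.sqrt ((1-α)*(1-9*α)) = (1-α)*(1-9*α) :=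
    Real.mul_self_sqrt hdisc
  have hNpos : 0 < (1+3*α)/2 + 2*Real.sqrt α * Real.cos t := by
    have h1 : 0 < (1 - 3*Real.sqrt α) * (1 - Real.sqrt α) := by nlinarith
    nlinarith [mul_nonneg hs0.le (by linarith : (0:ℝ) ≤ Real.cos t + 1)]
  have hDpos : 0 < 1 + α + 2*Real.sqrt α * Real.cos t := by
    nlinarith [mul_nonneg hs0.le (by linarith : (0:ℝ) ≤ Real.cos t + 1)]
  -- complex facts, all in push_cast normal form
  have hsum2 : Complex.exp (Complex.I*t) + Complex.exp (-(Complex.I*t))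
      = 2 * Complex.cos (t:ℂ) := by
    rw [show Complex.I * (t:ℂ) = (t:ℂ) * Complex.I by ring,
        show -((t:ℂ) * Complex.I) = (-(t:ℂ)) * Complex.I by ring,
        Complex.exp_mul_I, Complex.exp_mul_I, Complex.cos_neg, Complex.sin_neg]
    ring
  have h2 : Complex.exp (Complex.I*t) * Complex.exp (-(Complex.I*t)) = 1 := by
    rw [← Complex.exp_add]; simp
  have hee : Complex.exp (Complex.I*t) ^ 2 + 1
      = 2 * Complex.cos (t:ℂ) * Complex.exp (Complex.I*t) := by
    linear_combination Complex.exp (Complex.I*t) * hsum2 - h2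
  have hsC : ((Real.sqrt α : ℝ):ℂ) * ((Real.sqrt α : ℝ):ℂ) = (α:ℂ) := by exact_mod_cast hs2
  have hr2C : ((Real.sqrt ((1-α)*(1-9*α)) : ℝ):ℂ) * ((Real.sqrt ((1-α)*(1-9*α)) : ℝ):ℂ)
      = (1 - (α:ℂ)) * (1 - 9*(α:ℂ)) := by exact_mod_cast hr2
  have key : z^2 + (α:ℂ)
      = 2 * ((Real.sqrt α : ℝ):ℂ) * Complex.cos (t:ℂ) * z := by
    show (((Real.sqrt α : ℝ):ℂ) * Complex.exp (Complex.I*t))^2 + (α:ℂ)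
        = 2 * ((Real.sqrt α : ℝ):ℂ) * Complex.cos (t:ℂ)
          * (((Real.sqrt α : ℝ):ℂ) * Complex.exp (Complex.I*t))
    linear_combination (((Real.sqrt α : ℝ):ℂ))^2 * hee - hsC
  have hfac1 : (z - zp) * (z - zm)
      = ((1+3*(α:ℂ))/2 + 2*((Real.sqrt α : ℝ):ℂ)*Complex.cos (t:ℂ)) * z := by
    show (z - ((-(1+3*α)/4 + Real.sqrt ((1-α)*(1-9*α))/4 : ℝ) : ℂ))
        * (z - ((-(1+3*α)/4 - Real.sqrt ((1-α)*(1-9*α))/4 : ℝ) : ℂ))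
        = ((1+3*(α:ℂ))/2 + 2*((Real.sqrt α : ℝ):ℂ)*Complex.cos (t:ℂ)) * z
    push_cast
    linear_combination key - (1/16 : ℂ) * hr2C
  have hfac2 : (z + 1) * (z + (α:ℂ))
      = ((1 + (α:ℂ)) + 2*((Real.sqrt α : ℝ):ℂ)*Complex.cos (t:ℂ)) * z := by
    linear_combination key
  have hzne : z ≠ 0 := by
    apply mul_ne_zero
    · exact_mod_cast hs0.ne'
    · exact Complex.exp_ne_zero _
  have hDne : ((1 + (α:ℂ)) + 2*((Real.sqrt α : ℝ):ℂ)*Complex.cos (t:ℂ)) ≠ 0 := by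
    have : ((1 + α + 2*Real.sqrt α * Real.cos t : ℝ) : ℂ) ≠ 0 :=
      Complex.ofReal_ne_zero.mpr hDpos.ne'
    convert this using 1
    push_cast
    ring
  refine ⟨?_, ?_⟩
  · have hnum : (z - zp)^2 * (z - zm)^2
        = ((1+3*(α:ℂ))/2 + 2*((Real.sqrt α : ℝ):ℂ)*Complex.cos (t:ℂ))^2 * z^2 := by
      linear_combination ((z - zp)*(z - zm)
        + ((1+3*(α:ℂ))/2 + 2*((Real.sqrt α : ℝ):ℂ)*Complex.cos (t:ℂ))*z) * hfac1
    have hden : z^2 * (z+1)^2 * (z + (α:ℂ))^2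
        = ((1 + (α:ℂ)) + 2*((Real.sqrt α : ℝ):ℂ)*Complex.cos (t:ℂ))^2 * z^4 := by
      linear_combination (z^2 * ((z+1)*(z+(α:ℂ))
        + ((1 + (α:ℂ)) + 2*((Real.sqrt α : ℝ):ℂ)*Complex.cos (t:ℂ))*z)) * hfac2
    have hI : (Complex.I * z)^2 = -z^2 := by
      rw [mul_pow, Complex.I_sq]; ring
    rw [hnum, hden, hI]
    push_cast
    field_simp
  · apply div_neg_of_neg_of_pos
    · nlinarith
    · positivity
end

section
/- Let 1/9 < α ≤ 1 and η_cusp = cos(θ_α/2), where θ_α is determined by cos θ_α = (z_+ + z_-)/(2√α) = -(3-2√α+3α)/(8√α). Let η = cos(θ/2) with θ_α ≤ θ ≤ π, and let ψ ∈ [θ_α, π] satisfy sin(ψ/2)·sin(θ/2) = sin(θ_α/2). Then s = √α·e^{iψ} is a zero of the polynomial (1-η²)(s²+α) + (-2cos θ_α + 2η²)√α·s. -/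
/-- For `1/9 < α ≤ 1`, `θ_α ∈ [2π/3, π]` with `cos θ_α = -(3-2√α+3α)/(8√α)`
(so `z_± = √α e^{±iθ_α}`), let `η = cos(θ/2)` with `θ_α ≤ θ ≤ π` and let
`ψ ∈ [θ_α, π]` satisfy `sin(ψ/2)·sin(θ/2) = sin(θ_α/2)`. Then `s = √α·e^{iψ}`
is a zero of the polynomial `(1-η²)(s²+α) + (-2cos θ_α + 2η²)√α·s`. -/
theorem saddle_on_cut (α θα θ ψ η : ℝ) (hα1 : 1/9 < α) (hα2 : α ≤ 1)
    (hθα : θα ∈ Set.Icc (2*Real.pi/3) Real.pi)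
    (hcos : Real.cos θα = -(3 - 2*Real.sqrt α + 3*α)/(8*Real.sqrt α))
    (hθ1 : θα ≤ θ) (hθ2 : θ ≤ Real.pi)
    (hψ : ψ ∈ Set.Icc θα Real.pi)
    (hsin : Real.sin (ψ/2) * Real.sin (θ/2) = Real.sin (θα/2))
    (hη : η = Real.cos (θ/2)) :
    let s : ℂ := (Real.sqrt α : ℂ) * Complex.exp (Complex.I * (ψ:ℂ))
    ((1 - η^2 : ℝ) : ℂ) * (s^2 + (α:ℂ))
      + ((-2*Real.cos θα + 2*η^2 : ℝ) : ℂ) * (Real.sqrt α : ℂ) * s = 0 := by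
  intro s
  have hα0 : (0:ℝ) ≤ α := by linarith
  have hs2 : Real.sqrt α ^ 2 = α := Real.sq_sqrt hα0
  have half : ∀ x : ℝ, Real.sin (x/2)^2 = 1/2 - Real.cos x/2 := by
    intro x
    have := Real.sin_sq_eq_half_sub (x/2)
    rwa [show 2*(x/2) = x by ring] at this
  have key : (1 - η^2) * Real.cos ψ + η^2 = Real.cos θα := by
    have hsq : Real.sin (ψ/2)^2 * Real.sin (θ/2)^2 = Real.sin (θα/2)^2 := by
      rw [← mul_pow, hsin]
    have e1 := half ψ
    have e2 := half θ
    have e3 := half θα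
    have e4 : Real.cos (θ/2)^2 = 1/2 + Real.cos θ/2 := by
      have := Real.cos_sq (θ/2)
      rwa [show 2*(θ/2) = θ by ring] at this
    subst hη
    nlinarith [hsq, e1, e2, e3, e4]
  have hpy : Real.sin ψ ^ 2 = 1 - Real.cos ψ ^ 2 := by
    nlinarith [Real.sin_sq_add_cos_sq ψ]
  have hexp : Complex.exp (Complex.I * (ψ:ℂ))
      = (Real.cos ψ : ℂ) + (Real.sin ψ : ℂ) * Complex.I := by
    rw [mul_comm, Complex.exp_mul_I, Complex.ofReal_cos, Complex.ofReal_sin]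
  show ((1 - η^2 : ℝ) : ℂ) * (((Real.sqrt α : ℂ) * Complex.exp (Complex.I * (ψ:ℂ)))^2 + (α:ℂ))
      + ((-2*Real.cos θα + 2*η^2 : ℝ) : ℂ) * (Real.sqrt α : ℂ)
        * ((Real.sqrt α : ℂ) * Complex.exp (Complex.I * (ψ:ℂ))) = 0
  rw [hexp]
  have hR : (Real.sqrt α : ℂ)^2 = (α:ℂ) := by exact_mod_cast congrArg (Complex.ofReal ·) hs2
  have hK : ((1:ℂ) - (η:ℂ)^2) * (Real.cos ψ : ℂ) + (η:ℂ)^2 = (Real.cos θα : ℂ) := by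
    exact_mod_cast congrArg (Complex.ofReal ·) key
  have hP : (Real.sin ψ : ℂ)^2 = 1 - (Real.cos ψ : ℂ)^2 := by
    exact_mod_cast congrArg (Complex.ofReal ·) hpy
  simp only [Complex.ofReal_sub, Complex.ofReal_one, Complex.ofReal_pow, Complex.ofReal_neg, Complex.ofReal_mul, Complex.ofReal_add, Complex.ofReal_ofNat]
  linear_combination (norm := ring_nf)
    (((1:ℂ) - (η:ℂ)^2) * (((Real.cos ψ:ℂ) + (Real.sin ψ:ℂ)*Complex.I)^2 + 1)
      + ((-2*(Real.cos θα:ℂ) + 2*(η:ℂ)^2)) * ((Real.cos ψ:ℂ) + (Real.sin ψ:ℂ)*Complex.I)) * hR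
    + (α:ℂ) * ((1:ℂ) - (η:ℂ)^2) * (Complex.I^2 - 1) * hP
    + 2 * (α:ℂ) * ((Real.cos ψ:ℂ) + (Real.sin ψ:ℂ)*Complex.I) * hK
    + (α:ℂ) * ((1:ℂ)-(η:ℂ)^2) * ((Real.sin ψ:ℂ)^2) * Complex.I_sq
    + ((η:ℂ)^2 - 1) * hR
    + (α:ℂ) * ((η:ℂ)^2 - 1) * Complex.I^2 * hP
end
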